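/- Let α > -1/2, A_α(x) = |x|^{2α+1}, and for x ≠ 0 define Θ_0(x,y) = sgn(x)/(2A_α(x)) + sgn(y)/(2A_α(y)) for y ∈ [-|x|,|x|]. Then for b_{2m+1}(y) = (y/2)^{2m+1}/((α+1)_{m+1} m!) one has ∫_{-|x|}^{|x|} Θ_0(x,y) b_{2m+1}(y) A_α(y) dy = b_{2m+2}(x), where b_{2m+2}(x) = (x/2)^{2m+2}/((α+1)_{m+1} (m+1)!). -/

import Mathlib

/-- The Dunkl–Taylor monomials: `b_{2m}(x) = (x/2)^{2m}/((α+1)_m m!)` and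
`b_{2m+1}(x) = (x/2)^{2m+1}/((α+1)_{m+1} m!)`, with `(a)_m` the Pochhammer symbol. -/
noncomputable def dunklB (α : ℝ) (p : ℕ) (x : ℝ) : ℝ :=
  if Even p then (x / 2) ^ p / ((ascPochhammer ℝ (p / 2)).eval (α + 1) * (p / 2).factorial)
  else (x / 2) ^ p / ((ascPochhammer ℝ (p / 2 + 1)).eval (α + 1) * (p / 2).factorial)

noncomputable def theta0 (α : ℝ) (x y : ℝ) : ℝ :=
  Real.sign x / (2 * |x| ^ (2 * α + 1)) + Real.sign y / (2 * |y| ^ (2 * α + 1))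

/-! For `y ≠ 0`, `Θ₀(x,y) A_α(y) = sgn x · A_α(y) / (2 A_α(x)) + sgn y / 2`. Against `b_{2m+1}`
the first term gives an odd integrand, which integrates to zero over `[-|x|, |x|]`, while the second
gives `sgn y · b_{2m+1}(y) / 2 = b_{2m+1}(|y|) / 2`, which is even; so the integral is
`∫₀^{|x|} b_{2m+1} = b_{2m+2}(|x|) = b_{2m+2}(x)`. -/

open Real intervalIntegral
open MeasureTheory (volume)

section SymmetricIntervals

variable {E : Type*} [NormedAddCommGroup E] [NormedSpace ℝ E] {f : ℝ → E}

theorem intervalIntegral.integral_symm_eq_zero_of_odd (hf : ∀ y, f (-y) = -f y) (a : ℝ) :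
    ∫ y in (-a)..a, f y = 0 := by
  have h : ∫ y in (-a)..a, f y = -∫ y in (-a)..a, f y := by
    simpa [hf, integral_neg] using (integral_comp_neg (a := -a) (b := a) f).symm
  have h2 : (2 : ℝ) • ∫ y in (-a)..a, f y = 0 := by
    rw [two_smul]
    nth_rewrite 2 [h]
    exact add_neg_cancel _
  exact (smul_eq_zero.mp h2).resolve_left two_ne_zero

theorem intervalIntegral.integral_symm_of_even (hf : ∀ y, f (-y) = f y) {a : ℝ}
    (hint : IntervalIntegrable f volume 0 a) :
    ∫ y in (-a)..a, f y = (2 : ℝ) • ∫ y in 0..a, f y := by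
  have hneg : IntervalIntegrable f volume (-a) 0 := by
    simpa [hf] using ((IntervalIntegrable.iff_comp_neg).mp hint).symm
  have hleft : ∫ y in (-a)..0, f y = ∫ y in 0..a, f y := by
    simpa [hf] using (integral_comp_neg (a := 0) (b := a) f).symm
  rw [← integral_add_adjacent_intervals hneg hint, hleft, two_smul]

end SymmetricIntervals

section DunklMonomials

variable (α : ℝ)

theorem dunklB_neg (p : ℕ) (y : ℝ) : dunklB α p (-y) = (-1) ^ p * dunklB α p y := by
  rw [dunklB, dunklB, neg_div, neg_pow]
  split_ifs <;> ring

theorem continuous_dunklB (p : ℕ) : Continuous (dunklB α p) := by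
  unfold dunklB
  split_ifs <;> fun_prop

theorem dunklB_odd_zero (m : ℕ) : dunklB α (2 * m + 1) 0 = 0 := by
  have h := dunklB_neg α (2 * m + 1) 0
  rw [neg_zero, Odd.neg_one_pow ⟨m, rfl⟩] at h
  linarith

theorem dunklB_abs_of_even {p : ℕ} (hp : Even p) (x : ℝ) : dunklB α p |x| = dunklB α p x := by
  rcases abs_choice x with h | h <;> simp [h, dunklB_neg, hp.neg_one_pow]

theorem sign_mul_dunklB_odd (m : ℕ) (y : ℝ) :
    sign y * dunklB α (2 * m + 1) y = dunklB α (2 * m + 1) |y| := by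
  rcases lt_trichotomy y 0 with hy | rfl | hy
  · rw [sign_of_neg hy, abs_of_neg hy, dunklB_neg, Odd.neg_one_pow ⟨m, rfl⟩]
  · simp [dunklB_odd_zero]
  · rw [sign_of_pos hy, abs_of_pos hy, one_mul]

theorem integral_dunklB_odd (m : ℕ) (a : ℝ) :
    ∫ y in 0..a, dunklB α (2 * m + 1) y = dunklB α (2 * m + 2) a := by
  have hodd : ¬ Even (2 * m + 1) := Nat.not_even_iff_odd.mpr ⟨m, rfl⟩
  have heven : Even (2 * m + 2) := ⟨m + 1, by ring⟩
  have h1 : (2 * m + 1) / 2 = m := by omega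
  have h2 : (2 * m + 2) / 2 = m + 1 := by omega
  simp only [dunklB, if_neg hodd, if_pos heven, h1, h2, integral_div, div_pow,
    integral_pow, Nat.factorial_succ]
  push_cast
  field_simp
  ring

theorem integral_symm_dunklB_odd_mul_abs_rpow (m : ℕ) (s a : ℝ) :
    ∫ y in (-a)..a, dunklB α (2 * m + 1) y * |y| ^ s = 0 :=
  integral_symm_eq_zero_of_odd (fun y => by
    rw [dunklB_neg, Odd.neg_one_pow ⟨m, rfl⟩, abs_neg, neg_one_mul, neg_mul]) a

theorem integral_symm_dunklB_odd_abs (m : ℕ) {a : ℝ} (ha : 0 ≤ a) :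
    ∫ y in (-a)..a, dunklB α (2 * m + 1) |y| = 2 * dunklB α (2 * m + 2) a := by
  have hint : IntervalIntegrable (fun y => dunklB α (2 * m + 1) |y|) volume 0 a :=
    ((continuous_dunklB α _).comp continuous_abs).intervalIntegrable _ _
  rw [integral_symm_of_even (fun y => by rw [abs_neg]) hint, smul_eq_mul,
    ← integral_dunklB_odd]
  congr 1
  refine integral_congr fun y hy => ?_
  rw [Set.uIcc_of_le ha] at hy
  simp only [abs_of_nonneg hy.1]

end DunklMonomials

theorem theta0_mul_abs_rpow {α : ℝ} (hα : 2 * α + 1 ≠ 0) (x y : ℝ) :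
    theta0 α x y * |y| ^ (2 * α + 1)
      = sign x / (2 * |x| ^ (2 * α + 1)) * |y| ^ (2 * α + 1) + sign y / 2 := by
  rcases eq_or_ne y 0 with rfl | hy
  · simp [zero_rpow hα]
  · have : |y| ^ (2 * α + 1) ≠ 0 := (rpow_pos_of_pos (abs_pos.mpr hy) _).ne'
    rw [theta0]
    field_simp

theorem stmt3_general (α : ℝ) (hα : -1/2 < α) (m : ℕ) (x : ℝ) :
    ∫ y in (-|x|)..|x|, theta0 α x y * dunklB α (2 * m + 1) y * |y| ^ (2 * α + 1)
      = dunklB α (2 * m + 2) x := by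
  have hp : 0 < 2 * α + 1 := by linarith
  have hsplit : ∀ y, theta0 α x y * dunklB α (2 * m + 1) y * |y| ^ (2 * α + 1)
      = sign x / (2 * |x| ^ (2 * α + 1)) * (dunklB α (2 * m + 1) y * |y| ^ (2 * α + 1))
        + dunklB α (2 * m + 1) |y| / 2 := by
    intro y
    rw [mul_right_comm, theta0_mul_abs_rpow hp.ne', ← sign_mul_dunklB_odd]
    ring
  have hint_odd : IntervalIntegrable (fun y => dunklB α (2 * m + 1) y * |y| ^ (2 * α + 1))
      volume (-|x|) |x| :=
    ((continuous_dunklB α _).mul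
      (continuous_abs.rpow_const fun _ => Or.inr hp.le)).intervalIntegrable _ _
  have hint_even : IntervalIntegrable (fun y => dunklB α (2 * m + 1) |y| / 2)
      volume (-|x|) |x| :=
    (((continuous_dunklB α _).comp continuous_abs).div_const 2).intervalIntegrable _ _
  simp only [hsplit]
  rw [integral_add (hint_odd.const_mul _) hint_even, integral_const_mul, integral_div,
    integral_symm_dunklB_odd_mul_abs_rpow, integral_symm_dunklB_odd_abs α m (abs_nonneg x),
    dunklB_abs_of_even α ⟨m + 1, by ring⟩]
  ring

/-- `∫_{-|x|}^{|x|} Θ_0(x,y) b_{2m+1}(y) A_α(y) dy = b_{2m+2}(x)` for `x ≠ 0`,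
where `A_α(y) = |y|^{2α+1}`. -/
theorem stmt3 (α : ℝ) (hα : -1/2 < α) (m : ℕ) (x : ℝ) (hx : x ≠ 0) :
    ∫ y in (-|x|)..|x|, theta0 α x y * dunklB α (2 * m + 1) y * |y| ^ (2 * α + 1)
      = dunklB α (2 * m + 2) x :=
  stmt3_general α hα m x
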